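/- Let H be a complex Hilbert space and let A, B, X be bounded linear operators on H. If A and B are normal operators (i.e. A*A = AA* and B*B = BB*) and AX = XB, then A*X = XB*. -/

import Mathlib

open ContinuousLinearMap

/-- **Fuglede–Putnam theorem.** If `A` and `B` are normal bounded operators on a complex
Hilbert space `H` and `AX = XB`, then `A*X = XB*`. -/
theorem fuglede_putnam_normal {H : Type*} [NormedAddCommGroup H] [InnerProductSpace ℂ H]
    [CompleteSpace H] (A B X : H →L[ℂ] H)
    (hA : adjoint A * A = A * adjoint A) (hB : adjoint B * B = B * adjoint B)
    (h : A * X = X * B) : adjoint A * X = X * adjoint B :=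
  (SemiconjBy.star_right ⟨hB⟩ ⟨hA⟩ h.symm).eq.symm
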